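/- Let G be a connected graph with separation vertex s whose removal yields components V₁,...,V_k (k ≥ 2). Assume that every resolving set of G intersects every component V_i (for i = 1,...,k) when k = 2, or arbitrary k > 2. If A ⊆ V is a resolving set for G with s ∈ A, then A \ {s} is also a resolving set for G. -/
import Mathlib

open SimpleGraph

/-- `A` resolves `G`: every two distinct vertices have different distance to some `w ∈ A`. -/
def Resolves {W : Type*} (G : SimpleGraph W) (A : Set W) : Prop :=
  ∀ u v : W, u ≠ v → ∃ w ∈ A, G.dist u w ≠ G.dist v w

/-- `u` is an out-vertex for the `A`-gate `v`. -/
def IsOutVertex {W : Type*} (G : SimpleGraph W) (A : Set W) (v u : W) : Prop :=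
  u ≠ v ∧ ∀ w ∈ A, G.dist u w = G.dist u v + G.dist v w

/-- `v` is an `A`-gate in `G`. -/
def IsGate {W : Type*} (G : SimpleGraph W) (A : Set W) (v : W) : Prop :=
  ∃ u, IsOutVertex G A v u

/-- `Vc 0, …, Vc (k-1)` are exactly the vertex sets of the connected components of `G - s`. -/
def IsCompFamily {W : Type*} (G : SimpleGraph W) (s : W) {k : ℕ} (Vc : Fin k → Set W) : Prop :=
  (∀ i, (Vc i).Nonempty) ∧
  (∀ x : W, x ≠ s ↔ ∃ i, x ∈ Vc i) ∧
  (∀ x : W, ∀ i j, x ∈ Vc i → x ∈ Vc j → i = j) ∧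
  (∀ i, ∀ x ∈ Vc i, ∀ y ∈ Vc i, ∃ p : G.Walk x y, s ∉ p.support) ∧
  (∀ i j, ∀ x ∈ Vc i, ∀ y ∈ Vc j, (∃ p : G.Walk x y, s ∉ p.support) → i = j)

section Aux

variable {V : Type*} (G : SimpleGraph V) (s : V) {k : ℕ}
  (Vc : Fin k → Set V) (hcomp : IsCompFamily G s Vc)

include hcomp

/-- every vertex of a component is ≠ s -/
lemma mem_ne_s {i : Fin k} {x : V} (hx : x ∈ Vc i) : x ≠ s :=
  (hcomp.2.1 x).mpr ⟨i, hx⟩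

/-- key: crossing distances go through s -/
lemma dist_through (hG : G.Connected) {i j : Fin k} (hij : i ≠ j) {x w : V}
    (hx : x ∈ Vc i) (hw : w ∈ Vc j) :
    G.dist x w = G.dist x s + G.dist s w := by
  classical
  refine le_antisymm (hG.dist_triangle) ?_
  obtain ⟨p, hp⟩ := hG.exists_walk_length_eq_dist x w
  have hs : s ∈ p.support := by
    by_contra hns
    exact hij (hcomp.2.2.2.2 i j x hx w hw ⟨p, hns⟩)
  have hsplit := congr_arg SimpleGraph.Walk.length (p.take_spec hs)
  rw [SimpleGraph.Walk.length_append] at hsplit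
  calc G.dist x s + G.dist s w ≤ (p.takeUntil s hs).length + (p.dropUntil s hs).length :=
        Nat.add_le_add (SimpleGraph.dist_le _) (SimpleGraph.dist_le _)
    _ = p.length := hsplit
    _ = G.dist x w := hp

/-- each component contains a neighbour of s -/
lemma exists_adj (hG : G.Connected) (i : Fin k) : ∃ x ∈ Vc i, G.Adj x s := by
  classical
  obtain ⟨x₀, hx₀⟩ := hcomp.1 i
  obtain ⟨p₀⟩ := hG s x₀
  have hpath : p₀.bypass.IsPath := SimpleGraph.Walk.bypass_isPath p₀
  set p := p₀.bypass with hp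
  clear_value p
  cases p with
  | nil => exact absurd rfl (Ne.symm (mem_ne_s G s Vc hcomp hx₀))
  | cons hadj q =>
    rename_i b
    rw [SimpleGraph.Walk.cons_isPath_iff] at hpath
    have hsb : s ∉ q.support := hpath.2
    have hb : b ≠ s := fun h => hsb (h ▸ q.start_mem_support)
    obtain ⟨j, hbj⟩ := (hcomp.2.1 b).mp hb
    have hji : j = i := hcomp.2.2.2.2 j i b hbj x₀ hx₀ ⟨q, hsb⟩
    exact ⟨b, hji ▸ hbj, hadj.symm⟩

/-- a resolving set misses at most one component when k ≥ 3;
    combined with the k = 2 hypothesis we get two hit components. -/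
lemma two_hit (hG : G.Connected) (hk : 2 ≤ k)
    (hk2 : k = 2 → ∀ R : Set V, Resolves G R → ∀ i : Fin k, (R ∩ Vc i).Nonempty)
    (A : Set V) (hA : Resolves G A) :
    ∃ l₁ l₂ : Fin k, l₁ ≠ l₂ ∧ (A ∩ Vc l₁).Nonempty ∧ (A ∩ Vc l₂).Nonempty := by
  rcases eq_or_lt_of_le hk with hk' | hk'
  · have h := hk2 hk'.symm A hA
    refine ⟨⟨0, by omega⟩, ⟨1, by omega⟩, ?_, h _, h _⟩
    simp [Fin.ext_iff]
  · -- k ≥ 3 : at most one component is missed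
    have hmiss : ∀ i j : Fin k, i ≠ j → ¬(A ∩ Vc i).Nonempty → ¬(A ∩ Vc j).Nonempty → False := by
      intro i j hij hi hj
      obtain ⟨x, hxi, hxadj⟩ := exists_adj G s Vc hcomp hG i
      obtain ⟨y, hyj, hyadj⟩ := exists_adj G s Vc hcomp hG j
      have hxy : x ≠ y := fun h => hij (hcomp.2.2.1 x i j hxi (h ▸ hyj))
      obtain ⟨w, hwA, hwd⟩ := hA x y hxy
      by_cases hws : w = s
      · subst hws
        rw [SimpleGraph.dist_eq_one_iff_adj.mpr hxadj,
            SimpleGraph.dist_eq_one_iff_adj.mpr hyadj] at hwd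
        exact hwd rfl
      · obtain ⟨l, hwl⟩ := (hcomp.2.1 w).mp hws
        have hli : l ≠ i := fun h => hi ⟨w, hwA, h ▸ hwl⟩
        have hlj : l ≠ j := fun h => hj ⟨w, hwA, h ▸ hwl⟩
        have h1 : G.dist x w = G.dist x s + G.dist s w :=
          dist_through G s Vc hcomp hG (Ne.symm hli) hxi hwl
        have h2 : G.dist y w = G.dist y s + G.dist s w :=
          dist_through G s Vc hcomp hG (Ne.symm hlj) hyj hwl
        rw [h1, h2, SimpleGraph.dist_eq_one_iff_adj.mpr hxadj,
            SimpleGraph.dist_eq_one_iff_adj.mpr hyadj] at hwd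
        exact hwd rfl
    by_cases h0 : (A ∩ Vc ⟨0, by omega⟩).Nonempty
    · by_cases h1 : (A ∩ Vc ⟨1, by omega⟩).Nonempty
      · exact ⟨_, _, by simp [Fin.ext_iff], h0, h1⟩
      · by_cases h2 : (A ∩ Vc ⟨2, by omega⟩).Nonempty
        · exact ⟨_, _, by simp [Fin.ext_iff], h0, h2⟩
        · exact absurd (hmiss _ _ (by simp [Fin.ext_iff]) h1 h2) (by simp)
    · by_cases h1 : (A ∩ Vc ⟨1, by omega⟩).Nonempty
      · by_cases h2 : (A ∩ Vc ⟨2, by omega⟩).Nonempty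
        · exact ⟨_, _, by simp [Fin.ext_iff], h1, h2⟩
        · exact absurd (hmiss _ _ (by simp [Fin.ext_iff]) h0 h2) (by simp)
      · exact absurd (hmiss _ _ (by simp [Fin.ext_iff]) h0 h1) (by simp)

end Aux

/-- under the stated hypotheses, removing the separation vertex `s` from a
resolving set containing it leaves a resolving set. -/
theorem stmt6 {V : Type*} [Fintype V] (G : SimpleGraph V) (hG : G.Connected)
    (s : V) (k : ℕ) (Vc : Fin k → Set V) (hcomp : IsCompFamily G s Vc) (hk : 2 ≤ k)
    (hk2 : k = 2 → ∀ R : Set V, Resolves G R → ∀ i : Fin k, (R ∩ Vc i).Nonempty)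
    (A : Set V) (hA : Resolves G A) (hs : s ∈ A) :
    Resolves G (A \ {s}) := by
  obtain ⟨l₁, l₂, hl, ⟨w₁, hw₁A, hw₁⟩, ⟨w₂, hw₂A, hw₂⟩⟩ :=
    two_hit G s Vc hcomp hG hk hk2 A hA
  intro u v huv
  by_contra hcon
  push_neg at hcon
  -- hcon : ∀ w ∈ A \ {s}, G.dist u w = G.dist v w
  have heq : ∀ w ∈ A, w ≠ s → G.dist u w = G.dist v w := fun w hw hws =>
    hcon w ⟨hw, hws⟩
  -- s distinguishes u and v
  have husv : G.dist u s ≠ G.dist v s := by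
    obtain ⟨w, hwA, hwd⟩ := hA u v huv
    by_cases hws : w = s
    · exact hws ▸ hwd
    · exact absurd (heq w hwA hws) hwd
  have hw₁s : w₁ ≠ s := mem_ne_s G s Vc hcomp hw₁
  have hw₂s : w₂ ≠ s := mem_ne_s G s Vc hcomp hw₂
  by_cases hus : u = s
  · subst hus
    have hvs : v ≠ u := Ne.symm huv
    obtain ⟨j, hvj⟩ := (hcomp.2.1 v).mp hvs
    -- pick a hit component ≠ j
    have : ∃ w ∈ A, ∃ l, l ≠ j ∧ w ∈ Vc l := by
      by_cases h : l₁ = j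
      · exact ⟨w₂, hw₂A, l₂, h ▸ hl.symm, hw₂⟩
      · exact ⟨w₁, hw₁A, l₁, h, hw₁⟩
    obtain ⟨w, hwA, l, hlj, hwl⟩ := this
    have hws : w ≠ u := mem_ne_s G u Vc hcomp hwl
    have h1 : G.dist v w = G.dist v u + G.dist u w :=
      dist_through G u Vc hcomp hG hlj.symm hvj hwl
    have h2 := heq w hwA hws
    rw [h1] at h2
    have : G.dist v u = 0 := by omega
    exact hvs (hG.dist_eq_zero_iff.mp this)
  · by_cases hvs : v = s
    · subst hvs
      obtain ⟨j, huj⟩ := (hcomp.2.1 u).mp hus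
      have : ∃ w ∈ A, ∃ l, l ≠ j ∧ w ∈ Vc l := by
        by_cases h : l₁ = j
        · exact ⟨w₂, hw₂A, l₂, h ▸ hl.symm, hw₂⟩
        · exact ⟨w₁, hw₁A, l₁, h, hw₁⟩
      obtain ⟨w, hwA, l, hlj, hwl⟩ := this
      have hws : w ≠ v := mem_ne_s G v Vc hcomp hwl
      have h1 : G.dist u w = G.dist u v + G.dist v w :=
        dist_through G v Vc hcomp hG hlj.symm huj hwl
      have h2 := heq w hwA hws
      rw [h1] at h2
      have : G.dist u v = 0 := by omega
      exact hus (hG.dist_eq_zero_iff.mp this)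
    · -- both u, v off s
      obtain ⟨i, hui⟩ := (hcomp.2.1 u).mp hus
      obtain ⟨j, hvj⟩ := (hcomp.2.1 v).mp hvs
      -- generic inequality: a hit component ≠ i gives dist u s ≤ dist v s
      have step : ∀ w ∈ A, ∀ l, w ∈ Vc l → l ≠ i → G.dist u s ≤ G.dist v s := by
        intro w hwA l hwl hli
        have hws : w ≠ s := mem_ne_s G s Vc hcomp hwl
        have h1 : G.dist u w = G.dist u s + G.dist s w :=
          dist_through G s Vc hcomp hG hli.symm hui hwl
        have h2 : G.dist v w ≤ G.dist v s + G.dist s w := hG.dist_triangle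
        have h3 := heq w hwA hws
        omega
      have step' : ∀ w ∈ A, ∀ l, w ∈ Vc l → l ≠ j → G.dist v s ≤ G.dist u s := by
        intro w hwA l hwl hlj
        have hws : w ≠ s := mem_ne_s G s Vc hcomp hwl
        have h1 : G.dist v w = G.dist v s + G.dist s w :=
          dist_through G s Vc hcomp hG hlj.symm hvj hwl
        have h2 : G.dist u w ≤ G.dist u s + G.dist s w := hG.dist_triangle
        have h3 := heq w hwA hws
        omega
      have hle : G.dist u s ≤ G.dist v s := by
        by_cases h : l₁ = i
        · exact step w₂ hw₂A l₂ hw₂ (h ▸ hl.symm)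
        · exact step w₁ hw₁A l₁ hw₁ h
      have hge : G.dist v s ≤ G.dist u s := by
        by_cases h : l₁ = j
        · exact step' w₂ hw₂A l₂ hw₂ (h ▸ hl.symm)
        · exact step' w₁ hw₁A l₁ hw₁ h
      exact husv (le_antisymm hle hge)
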